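/- arXiv:math/0611854 — 7 statements merged into one kernel-verified Lean document; each statement's English description precedes it below -/
import Mathlib

section
/- The integral over the real line of the complex-valued function s ↦ Log(1+is)/(1+s^2) equals π·log 2; that is, ∫_{-∞}^{∞} Log(1+is)/(1+s^2) ds = π·log 2 (a real number). -/
/-!
Substituting `s = tan θ` turns `ds / (1 + s²)` into `dθ` on `(-π/2, π/2)`, and
`1 + i tan θ = e^{iθ} / cos θ`, so the integrand becomes `-log (cos θ) + iθ`. The odd part `iθ`
integrates to `0`, and `∫_{-π/2}^{π/2} log (cos θ) dθ = ∫_0^π log (sin θ) dθ = -π log 2`.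
-/

open MeasureTheory Real Complex Set

theorem integral_inv_one_add_sq_smul_eq_setIntegral_comp_tan {E : Type*} [NormedAddCommGroup E]
    [NormedSpace ℝ E] (g : ℝ → E) :
    ∫ s : ℝ, (1 + s ^ 2)⁻¹ • g s = ∫ θ in Ioo (-(π / 2)) (π / 2), g (Real.tan θ) := by
  have hderiv : ∀ θ ∈ Ioo (-(π / 2)) (π / 2),
      HasDerivWithinAt Real.tan (Real.cos θ ^ 2)⁻¹ (Ioo (-(π / 2)) (π / 2)) θ := fun θ hθ => by
    simpa using (Real.hasDerivAt_tan (Real.cos_pos_of_mem_Ioo hθ).ne').hasDerivWithinAt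
  rw [← setIntegral_univ, ← Real.image_tan_Ioo,
    integral_image_eq_integral_abs_deriv_smul measurableSet_Ioo hderiv Real.injOn_tan]
  refine setIntegral_congr_fun measurableSet_Ioo fun θ hθ => ?_
  have hcos : Real.cos θ ≠ 0 := (Real.cos_pos_of_mem_Ioo hθ).ne'
  simp only [Real.inv_one_add_tan_sq hcos, smul_smul, abs_inv, abs_pow, sq_abs]
  rw [inv_mul_cancel₀ (by positivity), one_smul]

theorem Complex.log_one_add_I_mul_tan {θ : ℝ} (hθ : θ ∈ Ioo (-(π / 2)) (π / 2)) :
    Complex.log (1 + I * (Real.tan θ : ℂ)) = (-Real.log (Real.cos θ) : ℝ) + θ * I := by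
  have hcos : 0 < Real.cos θ := Real.cos_pos_of_mem_Ioo hθ
  have hpolar : 1 + I * (Real.tan θ : ℂ) = ((Real.cos θ)⁻¹ : ℝ) * exp (θ * I) := by
    have : Complex.cos θ ≠ 0 := by exact_mod_cast hcos.ne'
    rw [Real.tan_eq_sin_div_cos, exp_mul_I]
    push_cast
    field_simp
  rw [hpolar, log_ofReal_mul (inv_pos.mpr hcos) (exp_ne_zero _), Real.log_inv,
    log_exp (by rw [mul_I_im, ofReal_re]; linarith [hθ.1, Real.pi_pos])
      (by rw [mul_I_im, ofReal_re]; linarith [hθ.2, Real.pi_pos])]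

theorem integral_log_cos_neg_pi_div_two_pi_div_two :
    ∫ θ in -(π / 2)..π / 2, Real.log (Real.cos θ) = -π * Real.log 2 := by
  have h := intervalIntegral.integral_comp_add_right (fun x => Real.log (Real.sin x)) (π / 2)
    (a := -(π / 2)) (b := π / 2)
  simp only [Real.sin_add_pi_div_two, neg_add_cancel, add_halves] at h
  rw [h, integral_log_sin_zero_pi]
  ring

theorem integral_neg_log_cos_add_mul_I :
    ∫ θ in -(π / 2)..π / 2, (((-Real.log (Real.cos θ) : ℝ) : ℂ) + θ * I) =
      ((π * Real.log 2 : ℝ) : ℂ) := by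
  have hlogcos : IntervalIntegrable (fun θ : ℝ => ((-Real.log (Real.cos θ) : ℝ) : ℂ)) volume
      (-(π / 2)) (π / 2) :=
    ⟨Integrable.ofReal intervalIntegrable_log_cos.1.neg,
      Integrable.ofReal intervalIntegrable_log_cos.2.neg⟩
  rw [intervalIntegral.integral_add hlogcos
      ((by fun_prop : Continuous fun θ : ℝ => (θ : ℂ) * I).intervalIntegrable _ _),
    intervalIntegral.integral_mul_const, intervalIntegral.integral_ofReal,
    intervalIntegral.integral_ofReal, intervalIntegral.integral_neg, integral_id,
    integral_log_cos_neg_pi_div_two_pi_div_two]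
  push_cast
  ring

/-- Key step in the proof of Lemma A.4:
`∫_{-∞}^{∞} Log(1+is)/(1+s²) ds = π log 2`, where `Log` is the principal
branch of the complex logarithm. -/
theorem integral_complex_log_one_add_I_mul_div_one_add_sq :
    ∫ s : ℝ, Complex.log (1 + Complex.I * (s : ℂ)) / (1 + (s : ℂ) ^ 2) =
      ((Real.pi * Real.log 2 : ℝ) : ℂ) := by
  calc ∫ s : ℝ, Complex.log (1 + I * (s : ℂ)) / (1 + (s : ℂ) ^ 2)
      = ∫ s : ℝ, (1 + s ^ 2)⁻¹ • Complex.log (1 + I * (s : ℂ)) := by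
        congr 1 with s
        rw [real_smul]
        push_cast
        ring
    _ = ∫ θ in Ioo (-(π / 2)) (π / 2), Complex.log (1 + I * (Real.tan θ : ℂ)) :=
        integral_inv_one_add_sq_smul_eq_setIntegral_comp_tan _
    _ = ∫ θ in -(π / 2)..π / 2, (((-Real.log (Real.cos θ) : ℝ) : ℂ) + θ * I) := by
        rw [intervalIntegral.integral_of_le (by linarith [Real.pi_pos]),
          integral_Ioc_eq_integral_Ioo]
        exact setIntegral_congr_fun measurableSet_Ioo fun θ hθ => Complex.log_one_add_I_mul_tan hθ
    _ = ((Real.pi * Real.log 2 : ℝ) : ℂ) := integral_neg_log_cos_add_mul_I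
end

section
/- For every real a > 0, ∫_{1}^{∞} 1/( r·√(r^2+a^2)·(√(r^2+a^2)+r) ) dr = a^{-2}·( log(√(1+a^2)+1) − log 2 ). -/
open MeasureTheory Real Filter Topology

/-!
Since `a² = (√(r²+a²) - r)(√(r²+a²) + r)`, the integrand equals `a⁻² (1/r - 1/√(r²+a²))`, whose
antiderivative is `a⁻² (log r - log (√(r²+a²) + r))`; this tends to `-a⁻² log 2` at infinity.
-/

section

variable {c : ℝ}

lemma sqrt_sq_add_add_pos (hc : 0 < c) (x : ℝ) : 0 < √(x ^ 2 + c) + x := by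
  have : |x| < √(x ^ 2 + c) := (lt_sqrt (abs_nonneg x)).2 (by rw [sq_abs]; linarith)
  linarith [neg_abs_le x]

lemma hasDerivAt_log_sqrt_sq_add_add (hc : 0 < c) (x : ℝ) :
    HasDerivAt (fun r => log (√(r ^ 2 + c) + r)) (1 / √(x ^ 2 + c)) x := by
  have hpos : 0 < x ^ 2 + c := by positivity
  have hderiv_sqrt : HasDerivAt (fun r => √(r ^ 2 + c)) (2 * x / (2 * √(x ^ 2 + c))) x :=
    (((hasDerivAt_id x).pow 2).add_const c).sqrt hpos.ne' |>.congr_deriv (by simp)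
  have hderiv_sum : HasDerivAt (fun r => √(r ^ 2 + c) + r) (2 * x / (2 * √(x ^ 2 + c)) + 1) x :=
    hderiv_sqrt.add (hasDerivAt_id' x)
  refine (hderiv_sum.log (sqrt_sq_add_add_pos hc x).ne').congr_deriv ?_
  have hs : 0 < √(x ^ 2 + c) := sqrt_pos.2 hpos
  have hsum := sqrt_sq_add_add_pos hc x
  field_simp
  ring

lemma one_div_mul_sqrt_mul_sqrt_add_eq (hc : 0 < c) {r : ℝ} (hr : r ≠ 0) :
    1 / (r * √(r ^ 2 + c) * (√(r ^ 2 + c) + r)) = c⁻¹ * (1 / r - 1 / √(r ^ 2 + c)) := by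
  have hs : 0 < √(r ^ 2 + c) := sqrt_pos.2 (by positivity)
  have hsum := sqrt_sq_add_add_pos hc r
  have hsq : √(r ^ 2 + c) ^ 2 = r ^ 2 + c := sq_sqrt (by positivity)
  field_simp
  linear_combination -hsq

lemma tendsto_sqrt_sq_add_div_atTop (c : ℝ) :
    Tendsto (fun r => √(r ^ 2 + c) / r) atTop (𝓝 1) := by
  have hquot : Tendsto (fun r : ℝ => 1 + c / r ^ 2) atTop (𝓝 1) := by
    simpa using tendsto_const_nhds.add
      ((tendsto_const_nhds (x := c)).div_atTop (tendsto_pow_atTop two_ne_zero))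
  have := (continuous_sqrt.tendsto 1).comp hquot
  rw [sqrt_one] at this
  refine this.congr' ?_
  filter_upwards [eventually_gt_atTop 0] with r hr
  rw [Function.comp_apply, one_add_div (by positivity), sqrt_div' _ (by positivity),
    sqrt_sq hr.le]

lemma tendsto_log_sub_log_sqrt_sq_add_add_atTop (c : ℝ) :
    Tendsto (fun r => log r - log (√(r ^ 2 + c) + r)) atTop (𝓝 (-log 2)) := by
  have hlim : Tendsto (fun r => √(r ^ 2 + c) / r + 1) atTop (𝓝 2) := by
    simpa [one_add_one_eq_two] using (tendsto_sqrt_sq_add_div_atTop c).add_const 1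
  refine ((continuousAt_log two_ne_zero).tendsto.comp hlim).neg.congr' ?_
  filter_upwards [eventually_gt_atTop 0] with r hr
  rw [Function.comp_apply, div_add_one hr.ne', log_div _ hr.ne', neg_sub]
  exact (lt_of_lt_of_le hr (by linarith [sqrt_nonneg (r ^ 2 + c)])).ne'

theorem integral_Ioi_one_div_mul_sqrt_mul_sqrt_add (hc : 0 < c) {b : ℝ} (hb : 0 < b) :
    ∫ r in Set.Ioi b, 1 / (r * √(r ^ 2 + c) * (√(r ^ 2 + c) + r)) =
      c⁻¹ * (log (√(b ^ 2 + c) + b) - log b - log 2) := by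
  set F := fun r => c⁻¹ * (log r - log (√(r ^ 2 + c) + r))
  have hderiv : ∀ x ∈ Set.Ici b,
      HasDerivAt F (1 / (x * √(x ^ 2 + c) * (√(x ^ 2 + c) + x))) x := by
    intro x hx
    have hx : 0 < x := hb.trans_le hx
    rw [one_div_mul_sqrt_mul_sqrt_add_eq hc hx.ne']
    exact (((hasDerivAt_log hx.ne').congr_deriv (one_div x).symm).sub
      (hasDerivAt_log_sqrt_sq_add_add hc x)).const_mul c⁻¹
  have hnonneg : ∀ x ∈ Set.Ioi b, 0 ≤ 1 / (x * √(x ^ 2 + c) * (√(x ^ 2 + c) + x)) := by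
    intro x hx
    have hsum := sqrt_sq_add_add_pos hc x
    have hx := hb.trans hx
    positivity
  rw [integral_Ioi_of_hasDerivAt_of_nonneg' hderiv hnonneg
    ((tendsto_log_sub_log_sqrt_sq_add_add_atTop c).const_mul c⁻¹)]
  ring

end

/-- Formula (A.4) of Lemma A.3:
`∫_1^∞ dr/(r·√(r²+a²)·(√(r²+a²)+r)) = a⁻²(log(√(1+a²)+1) − log 2)` for `a > 0`. -/
theorem integral_A4 (a : ℝ) (ha : 0 < a) :
    ∫ r in Set.Ioi (1 : ℝ),
        1 / (r * Real.sqrt (r ^ 2 + a ^ 2) * (Real.sqrt (r ^ 2 + a ^ 2) + r)) =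
      a ^ (-2 : ℤ) * (Real.log (Real.sqrt (1 + a ^ 2) + 1) - Real.log 2) := by
  rw [integral_Ioi_one_div_mul_sqrt_mul_sqrt_add (pow_pos ha 2) one_pos, zpow_neg, one_pow,
    log_one, sub_zero]
  norm_cast
end

section
/- For every real a > 0 and every integer j ≥ 1, ∫_{1}^{∞} (√(r^2+a^2)−r)^{j−1} / ( √(r^2+a^2)·(√(r^2+a^2)+r)^{j+1} ) dr = (2j)^{-1}·a^{-2}·(√(1+a^{-2}) − a^{-1})^{2j}. -/
open MeasureTheory Real Filter Topology Set

/-!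
With `s = √(r² + a²)`, the ratio `u = (s - r)/(s + r)` satisfies `(s - r)(s + r) = a²` and
`u' = -2a² / (s (s + r)²)`, so the integrand is `-u^(j-1) u' / (2a²)`, the derivative of
`-u^j / (2 j a²)`. Since `u → 0` at infinity, the integral is `u(1)^j / (2 j a²)`, and
`u(1) = ((√(1 + a²) - 1)/a)² = (√(1 + a⁻²) - a⁻¹)²`.
-/

namespace IntegralA5

/-- With `r = a sinh t` this is `e^(-2t)`. -/
noncomputable def sqrtRatio (a r : ℝ) : ℝ := (√(r ^ 2 + a ^ 2) - r) / (√(r ^ 2 + a ^ 2) + r)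

variable {a : ℝ}

theorem sq_sqrt_sq_add_sq (a r : ℝ) : √(r ^ 2 + a ^ 2) ^ 2 = r ^ 2 + a ^ 2 :=
  sq_sqrt (by positivity)

theorem sqrt_sq_add_sq_sub_mul_add (a r : ℝ) :
    (√(r ^ 2 + a ^ 2) - r) * (√(r ^ 2 + a ^ 2) + r) = a ^ 2 := by
  linear_combination sq_sqrt_sq_add_sq a r

theorem abs_lt_sqrt_sq_add_sq (ha : a ≠ 0) (r : ℝ) : |r| < √(r ^ 2 + a ^ 2) := by
  rw [lt_sqrt (abs_nonneg r), sq_abs]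
  linarith [pow_pos (abs_pos.mpr ha) 2, sq_abs a]

theorem sqrt_sq_add_sq_sub_pos (ha : a ≠ 0) (r : ℝ) : 0 < √(r ^ 2 + a ^ 2) - r := by
  linarith [le_abs_self r, abs_lt_sqrt_sq_add_sq ha r]

theorem sqrt_sq_add_sq_add_pos (ha : a ≠ 0) (r : ℝ) : 0 < √(r ^ 2 + a ^ 2) + r := by
  linarith [neg_abs_le r, abs_lt_sqrt_sq_add_sq ha r]

theorem sqrtRatio_eq_sq (ha : a ≠ 0) (r : ℝ) :
    sqrtRatio a r = ((√(r ^ 2 + a ^ 2) - r) / a) ^ 2 := by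
  have hsum := sqrt_sq_add_sq_add_pos ha r
  rw [sqrtRatio, div_pow, div_eq_div_iff hsum.ne' (pow_ne_zero 2 ha)]
  linear_combination -(√(r ^ 2 + a ^ 2) - r) * sqrt_sq_add_sq_sub_mul_add a r

theorem sqrtRatio_eq_div_sq (ha : a ≠ 0) (r : ℝ) :
    sqrtRatio a r = a ^ 2 / (√(r ^ 2 + a ^ 2) + r) ^ 2 := by
  have hsum := sqrt_sq_add_sq_add_pos ha r
  rw [sqrtRatio, div_eq_div_iff hsum.ne' (by positivity)]
  linear_combination (√(r ^ 2 + a ^ 2) + r) * sqrt_sq_add_sq_sub_mul_add a r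

theorem tendsto_sqrtRatio_atTop (ha : a ≠ 0) : Tendsto (sqrtRatio a) atTop (𝓝 0) := by
  have hsum : Tendsto (fun r => √(r ^ 2 + a ^ 2) + r) atTop atTop :=
    tendsto_atTop_mono
      (fun r => by dsimp only [id]; linarith [le_abs_self r, abs_lt_sqrt_sq_add_sq ha r])
      (tendsto_id.const_mul_atTop two_pos)
  rw [funext (sqrtRatio_eq_div_sq ha)]
  exact tendsto_const_nhds.div_atTop ((tendsto_pow_atTop two_ne_zero).comp hsum)

theorem hasDerivAt_sqrt_sq_add_sq (ha : a ≠ 0) (x : ℝ) :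
    HasDerivAt (fun r => √(r ^ 2 + a ^ 2)) (x / √(x ^ 2 + a ^ 2)) x := by
  have hsq : HasDerivAt (fun r : ℝ => r ^ 2 + a ^ 2) (2 * x) x := by
    simpa using (hasDerivAt_pow 2 x).add_const (a ^ 2)
  exact (hsq.sqrt (by positivity)).congr_deriv (by field_simp)

theorem hasDerivAt_sqrtRatio (ha : a ≠ 0) (x : ℝ) :
    HasDerivAt (sqrtRatio a)
      (-2 * a ^ 2 / (√(x ^ 2 + a ^ 2) * (√(x ^ 2 + a ^ 2) + x) ^ 2)) x := by
  have hs := hasDerivAt_sqrt_sq_add_sq ha x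
  have hsum := sqrt_sq_add_sq_add_pos ha x
  refine ((hs.sub (hasDerivAt_id x)).div (hs.add (hasDerivAt_id x)) hsum.ne').congr_deriv ?_
  simp only [Pi.add_apply, Pi.sub_apply, id_eq]
  field_simp
  linear_combination (-2) * sq_sqrt_sq_add_sq a x

theorem hasDerivAt_neg_sqrtRatio_pow_div (ha : a ≠ 0) (k : ℕ) (x : ℝ) :
    HasDerivAt (fun r => -sqrtRatio a r ^ (k + 1) / (2 * (k + 1) * a ^ 2))
      ((√(x ^ 2 + a ^ 2) - x) ^ k / (√(x ^ 2 + a ^ 2) * (√(x ^ 2 + a ^ 2) + x) ^ (k + 2))) x := by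
  refine ((((hasDerivAt_sqrtRatio ha x).pow (k + 1)).neg).div_const _).congr_deriv ?_
  simp only [sqrtRatio, div_pow, Nat.add_sub_cancel]
  push_cast
  field_simp
  ring

theorem sqrt_one_add_inv_sq_sub_inv (ha : 0 < a) :
    √(1 + a⁻¹ ^ 2) - a⁻¹ = (√(1 ^ 2 + a ^ 2) - 1) / a := by
  have h : 1 + a⁻¹ ^ 2 = (1 ^ 2 + a ^ 2) / a ^ 2 := by field_simp; ring
  rw [h, sqrt_div' _ (sq_nonneg a), sqrt_sq ha.le, sub_div, one_div]

end IntegralA5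

open IntegralA5 in
/-- Formula (A.5) of Lemma A.3: for `a > 0` and `j ≥ 1`,
`∫_1^∞ (√(r²+a²)−r)^(j−1)/(√(r²+a²)·(√(r²+a²)+r)^(j+1)) dr
  = (2j)⁻¹ a⁻² (√(1+a⁻²) − a⁻¹)^(2j)`. -/
theorem integral_A5 (a : ℝ) (ha : 0 < a) (j : ℕ) (hj : 1 ≤ j) :
    ∫ r in Set.Ioi (1 : ℝ),
        (Real.sqrt (r ^ 2 + a ^ 2) - r) ^ (j - 1) /
          (Real.sqrt (r ^ 2 + a ^ 2) * (Real.sqrt (r ^ 2 + a ^ 2) + r) ^ (j + 1)) =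
      (2 * (j : ℝ))⁻¹ * a ^ (-2 : ℤ) * (Real.sqrt (1 + a⁻¹ ^ 2) - a⁻¹) ^ (2 * j) := by
  obtain ⟨k, rfl⟩ := Nat.exists_eq_add_of_le' hj
  have hnonneg (x : ℝ) :
      0 ≤ (√(x ^ 2 + a ^ 2) - x) ^ k / (√(x ^ 2 + a ^ 2) * (√(x ^ 2 + a ^ 2) + x) ^ (k + 2)) := by
    have := sqrt_sq_add_sq_sub_pos ha.ne' x
    have := sqrt_sq_add_sq_add_pos ha.ne' x
    positivity
  have hlim : Tendsto (fun r => -sqrtRatio a r ^ (k + 1) / (2 * (k + 1) * a ^ 2)) atTop (𝓝 0) := by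
    simpa using ((tendsto_sqrtRatio_atTop ha.ne').pow (k + 1)).neg.div_const _
  rw [Nat.add_sub_cancel, integral_Ioi_of_hasDerivAt_of_nonneg'
    (fun x _ => hasDerivAt_neg_sqrtRatio_pow_div ha.ne' k x) (fun x _ => hnonneg x) hlim,
    sqrtRatio_eq_sq ha.ne', pow_mul, sqrt_one_add_inv_sq_sub_inv ha]
  push_cast
  field_simp
  ring
end

section
/- Let r > 0 and κ > 0 be real numbers and let l, m be natural numbers with l > m. Then (1/(2π))·∫_{ℝ} (r−it)^l·(r+it)^m / ( (r+it)^{l+1}·(r−it)^{m+1}·(κ+it) ) dt = 0, and (1/(2π))·∫_{ℝ} (r−it)^l·(r+it)^m / ( (r+it)^{l+1}·(r−it)^{m+1}·(κ−it) ) dt = (r−κ)^{l−m−1} / (r+κ)^{l−m+1}. -/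
/-!
Write `z = r + it` and `w = r - it`. After cancelling common factors both integrands are
`w ^ n / (z ^ (n + 2) * (κ ± it))` with `n = l - m - 1`. Substituting `w = 2r - z` lowers `n`
at the cost of one power of `z`, and since `κ ± it = c + s z` is affine in `z`, partial fractions
lower the power of `z` further. Everything thus reduces to `∫ z⁻ᵏ = 0` for `k ≥ 2` (antiderivative
`z¹⁻ᵏ`) and to `∫ 1 / ((r + it) (κ ± it))`, whose antiderivative `log (r + it) - log (κ ± it)`
tends to `0` at both ends in the `+` case and to `± iπ` at `± ∞` in the `-` case, because
`arg (κ + it) → ± π / 2`.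
-/

open MeasureTheory Real Complex Filter Topology Bornology ComplexConjugate

section Line

variable {a : ℝ}

theorem ofReal_add_I_mul_ne_zero (ha : a ≠ 0) (t : ℝ) : (a : ℂ) + I * t ≠ 0 :=
  fun h => ha (by simpa using congrArg re h)

theorem ne_zero_of_norm_ofReal_add_I_mul_le {κ t : ℝ} {x : ℂ} (hκ : 0 < κ)
    (h : ‖(κ : ℂ) + I * t‖ ≤ ‖x‖) : x ≠ 0 :=
  norm_pos_iff.1 ((norm_pos_iff.2 (ofReal_add_I_mul_ne_zero hκ.ne' t)).trans_le h)

theorem ofReal_sub_I_mul_eq_conj (a t : ℝ) : (a : ℂ) - I * t = conj ((a : ℂ) + I * t) := by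
  simp [sub_eq_add_neg]

theorem norm_ofReal_sub_I_mul (a t : ℝ) : ‖(a : ℂ) - I * t‖ = ‖(a : ℂ) + I * t‖ := by
  rw [ofReal_sub_I_mul_eq_conj, RCLike.norm_conj]

theorem ofReal_sub_I_mul_ne_zero (ha : a ≠ 0) (t : ℝ) : (a : ℂ) - I * t ≠ 0 := by
  rw [ofReal_sub_I_mul_eq_conj]; exact (map_ne_zero _).2 (ofReal_add_I_mul_ne_zero ha t)

theorem ofReal_add_I_mul_mem_slitPlane (ha : 0 < a) (t : ℝ) : (a : ℂ) + I * t ∈ slitPlane :=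
  mem_slitPlane_iff.2 (Or.inl (by simpa using ha))

theorem sq_norm_ofReal_add_I_mul (a t : ℝ) : ‖(a : ℂ) + I * t‖ ^ 2 = a ^ 2 + t ^ 2 := by
  rw [Complex.sq_norm, normSq_apply]; simp; ring

theorem abs_le_norm_ofReal_add_I_mul (a t : ℝ) : |t| ≤ ‖(a : ℂ) + I * t‖ := by
  simpa using abs_im_le_norm ((a : ℂ) + I * t)

theorem le_norm_ofReal_add_I_mul (ha : 0 ≤ a) (t : ℝ) : a ≤ ‖(a : ℂ) + I * t‖ := by
  simpa [abs_of_nonneg ha] using abs_re_le_norm ((a : ℂ) + I * t)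

theorem hasDerivAt_ofReal_add_I_mul (a t : ℝ) :
    HasDerivAt (fun t : ℝ => (a : ℂ) + I * t) I t := by
  simpa using ((hasDerivAt_id t).ofReal_comp.const_mul I).const_add (a : ℂ)

theorem tendsto_ofReal_add_I_mul_cocompact (a : ℝ) :
    Tendsto (fun t : ℝ => (a : ℂ) + I * t) (cocompact ℝ) (cobounded ℂ) :=
  tendsto_norm_atTop_iff_cobounded.1 <| tendsto_atTop_mono
    (fun t => by simpa using abs_le_norm_ofReal_add_I_mul a t) tendsto_norm_cocompact_atTop

theorem min_sq_mul_one_add_sq_le_sq_norm (ha : 0 < a) (t : ℝ) :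
    min a 1 ^ 2 * (1 + t ^ 2) ≤ ‖(a : ℂ) + I * t‖ ^ 2 := by
  have h₁ : min a 1 ^ 2 ≤ a ^ 2 := pow_le_pow_left₀ (by positivity) (min_le_left a 1) 2
  have h₂ : min a 1 ^ 2 ≤ 1 := pow_le_one₀ (by positivity) (min_le_right a 1)
  rw [sq_norm_ofReal_add_I_mul]
  nlinarith [sq_nonneg t]

end Line

theorem integrable_inv_norm_mul_norm {a b : ℝ} (ha : 0 < a) (hb : 0 < b) :
    Integrable fun t : ℝ => (‖(a : ℂ) + I * t‖ * ‖(b : ℂ) + I * t‖)⁻¹ := by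
  have hc : 0 < min a 1 * min b 1 := by positivity
  refine ((integrable_inv_one_add_sq).const_mul (min a 1 * min b 1)⁻¹).mono'
    (by fun_prop) (Eventually.of_forall fun t => ?_)
  have hsq : (min a 1 * min b 1 * (1 + t ^ 2)) ^ 2 ≤
      (‖(a : ℂ) + I * t‖ * ‖(b : ℂ) + I * t‖) ^ 2 := by
    rw [mul_pow, mul_pow, mul_pow, sq (1 + t ^ 2)]
    have := mul_le_mul (min_sq_mul_one_add_sq_le_sq_norm ha t)
      (min_sq_mul_one_add_sq_le_sq_norm hb t) (by positivity) (by positivity)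
    linarith
  have hle := (pow_le_pow_iff_left₀ (by positivity) (by positivity) two_ne_zero).1 hsq
  rw [norm_inv, norm_of_nonneg (by positivity), ← mul_inv]
  exact inv_anti₀ (by positivity) hle

noncomputable def laguerreIntegral (r : ℝ) (D : ℝ → ℂ) (n p : ℕ) : ℂ :=
  ∫ t : ℝ, ((r : ℂ) - I * t) ^ n / (((r : ℂ) + I * t) ^ p * D t)

section Integrability

variable {r κ : ℝ} {D : ℝ → ℂ}

theorem integrable_laguerre (hr : 0 < r) (hκ : 0 < κ) (hD : Continuous D)
    (hDκ : ∀ t : ℝ, ‖(κ : ℂ) + I * t‖ ≤ ‖D t‖) {n p : ℕ} (hnp : n < p) :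
    Integrable fun t : ℝ => ((r : ℂ) - I * t) ^ n / (((r : ℂ) + I * t) ^ p * D t) := by
  obtain ⟨q, rfl⟩ := Nat.exists_eq_add_of_lt hnp
  have hz := ofReal_add_I_mul_ne_zero hr.ne'
  have hzκ t := norm_pos_iff.2 (ofReal_add_I_mul_ne_zero hκ.ne' t)
  have hDne t : D t ≠ 0 := ne_zero_of_norm_ofReal_add_I_mul_le hκ (hDκ t)
  have hcont : Continuous fun t : ℝ =>
      ((r : ℂ) - I * t) ^ n / (((r : ℂ) + I * t) ^ (n + q + 1) * D t) :=
    .div (by fun_prop) (by fun_prop) fun t => mul_ne_zero (pow_ne_zero _ (hz t)) (hDne t)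
  refine ((integrable_inv_norm_mul_norm hr hκ).const_mul (r ^ q)⁻¹).mono'
    hcont.aestronglyMeasurable (Eventually.of_forall fun t => ?_)
  have hR := norm_pos_iff.2 (hz t)
  rw [norm_div, norm_mul, norm_pow, norm_pow, norm_ofReal_sub_I_mul,
    show n + q + 1 = n + (q + 1) by ring, pow_add, mul_assoc, div_mul_eq_div_div,
    div_self (pow_ne_zero _ hR.ne'), one_div, ← mul_inv, pow_succ, mul_assoc]
  have := hzκ t
  exact inv_anti₀ (by positivity) (mul_le_mul (pow_le_pow_left₀ hr.le
    (le_norm_ofReal_add_I_mul hr.le t) q) (mul_le_mul_of_nonneg_left (hDκ t) hR.le)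
    (by positivity) (by positivity))

end Integrability

theorem integral_inv_ofReal_add_I_mul_pow {r : ℝ} (hr : 0 < r) (k : ℕ) :
    ∫ t : ℝ, (((r : ℂ) + I * t) ^ (k + 2))⁻¹ = 0 := by
  have hz := ofReal_add_I_mul_ne_zero hr.ne'
  have hint : Integrable fun t : ℝ => (((r : ℂ) + I * t) ^ (k + 2))⁻¹ := by
    simpa [pow_succ] using integrable_laguerre hr hr (D := fun t => (r : ℂ) + I * t)
      (by fun_prop) (fun _ => le_rfl) (Nat.succ_pos k)
  have hderiv : ∀ t : ℝ, HasDerivAt (fun t : ℝ => I / (k + 1) * (((r : ℂ) + I * t) ^ (k + 1))⁻¹)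
      (((r : ℂ) + I * t) ^ (k + 2))⁻¹ t := fun t => by
    refine ((((hasDerivAt_ofReal_add_I_mul r t).fun_pow (k + 1)).fun_inv
      (pow_ne_zero _ (hz t))).const_mul (I / (k + 1))).congr_deriv ?_
    have hk : (k : ℂ) + 1 ≠ 0 := Nat.cast_add_one_ne_zero k
    have hzt := hz t
    generalize (r : ℂ) + I * t = z at hzt ⊢
    push_cast [Nat.add_sub_cancel]
    field_simp
    linear_combination -z ^ (2 * k + 2) * I_sq
  have hlim : Tendsto (fun t : ℝ => I / (k + 1) * (((r : ℂ) + I * t) ^ (k + 1))⁻¹)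
      (cocompact ℝ) (𝓝 0) := by
    simpa [inv_pow] using
      (((tendsto_inv₀_cobounded.comp (tendsto_ofReal_add_I_mul_cocompact r)).pow (k + 1)).const_mul
        (I / (k + 1)))
  simpa using integral_of_hasDerivAt_of_tendsto hderiv hint (hlim.mono_left atBot_le_cocompact)
    (hlim.mono_left atTop_le_cocompact)

section Log

variable {a b : ℝ}

theorem hasDerivAt_log_ofReal_add_I_mul (ha : 0 < a) (t : ℝ) :
    HasDerivAt (fun t : ℝ => log ((a : ℂ) + I * t)) (I / ((a : ℂ) + I * t)) t :=
  (hasDerivAt_ofReal_add_I_mul a t).clog_real (ofReal_add_I_mul_mem_slitPlane ha t)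

theorem hasDerivAt_log_ofReal_sub_I_mul (ha : 0 < a) (t : ℝ) :
    HasDerivAt (fun t : ℝ => log ((a : ℂ) - I * t)) (-I / ((a : ℂ) - I * t)) t := by
  have h : HasDerivAt (fun t : ℝ => (a : ℂ) - I * t) (-I) t := by
    simpa using ((hasDerivAt_id t).ofReal_comp.const_mul I).const_sub (a : ℂ)
  exact h.clog_real (mem_slitPlane_iff.2 (Or.inl (by simpa using ha)))

theorem log_sub_log_eq_log_div (ha : 0 < a) (hb : 0 < b) (t : ℝ) :
    log ((a : ℂ) + I * t) - log ((b : ℂ) + I * t) =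
      log (((a : ℂ) + I * t) / ((b : ℂ) + I * t)) := by
  have hzb := ofReal_add_I_mul_ne_zero hb.ne' t
  have hre : 0 < (((a : ℂ) + I * t) / ((b : ℂ) + I * t)).re := by
    rw [div_re, ← add_div]
    simpa using div_pos (add_pos_of_pos_of_nonneg (mul_pos ha hb) (mul_self_nonneg (t : ℝ)))
      (normSq_pos.2 hzb)
  have harg₁ := abs_arg_lt_pi_div_two_iff.2 (Or.inl hre)
  have harg₂ := abs_arg_lt_pi_div_two_iff.2 (Or.inl (show 0 < ((b : ℂ) + I * t).re by simpa))
  rw [sub_eq_iff_eq_add, ← (log_mul_eq_add_log_iff (div_ne_zero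
    (ofReal_add_I_mul_ne_zero ha.ne' t) hzb) hzb).2, div_mul_cancel₀ _ hzb]
  constructor <;> linarith [abs_lt.1 harg₁, abs_lt.1 harg₂]

theorem tendsto_log_sub_log (ha : 0 < a) (hb : 0 < b) :
    Tendsto (fun t : ℝ => log ((a : ℂ) + I * t) - log ((b : ℂ) + I * t)) (cocompact ℝ) (𝓝 0) := by
  have hdiv : Tendsto (fun t : ℝ => ((a : ℂ) + I * t) / ((b : ℂ) + I * t)) (cocompact ℝ) (𝓝 1) := by
    have h := ((tendsto_inv₀_cobounded.comp (tendsto_ofReal_add_I_mul_cocompact b)).const_mul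
      ((a : ℂ) - b)).const_add 1
    rw [mul_zero, add_zero] at h
    refine h.congr fun t => ?_
    have := ofReal_add_I_mul_ne_zero hb.ne' t
    simp only [Function.comp_apply]
    field_simp
    ring
  simpa [log_sub_log_eq_log_div ha hb, Function.comp_def] using
    (continuousAt_clog one_mem_slitPlane).tendsto.comp hdiv

theorem tendsto_arg_ofReal_add_I_mul_atTop (a : ℝ) :
    Tendsto (fun t : ℝ => arg ((a : ℂ) + I * t)) atTop (𝓝 (π / 2)) := by
  have h₀ : Tendsto (fun t : ℝ => a * t⁻¹) atTop (𝓝 0) := by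
    simpa using tendsto_inv_atTop_zero.const_mul a
  have h : Tendsto (fun t : ℝ => ((a * t⁻¹ : ℝ) : ℂ) + I) atTop (𝓝 I) := by
    simpa using ((continuous_ofReal.tendsto 0).comp h₀).add_const I
  rw [← arg_I]
  refine ((continuousAt_arg (mem_slitPlane_iff.2 (Or.inr (by simp)))).tendsto.comp h).congr'
    ?_
  filter_upwards [eventually_gt_atTop 0] with t ht
  rw [Function.comp_apply, ← arg_real_mul ((a : ℂ) + I * t) (inv_pos.2 ht)]
  congr 1
  have : (t : ℂ) ≠ 0 := ofReal_ne_zero.2 ht.ne'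
  push_cast
  field_simp

theorem tendsto_arg_ofReal_add_I_mul_atBot (a : ℝ) :
    Tendsto (fun t : ℝ => arg ((a : ℂ) + I * t)) atBot (𝓝 (-(π / 2))) := by
  have h₀ : Tendsto (fun t : ℝ => a * (-t)⁻¹) atBot (𝓝 0) := by
    simpa using (tendsto_inv_atTop_zero.comp tendsto_neg_atBot_atTop).const_mul a
  have h : Tendsto (fun t : ℝ => ((a * (-t)⁻¹ : ℝ) : ℂ) - I) atBot (𝓝 (-I)) := by
    simpa using ((continuous_ofReal.tendsto 0).comp h₀).sub_const I
  rw [← arg_neg_I]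
  refine ((continuousAt_arg (mem_slitPlane_iff.2 (Or.inr (by simp)))).tendsto.comp h).congr'
    ?_
  filter_upwards [eventually_lt_atBot 0] with t ht
  rw [Function.comp_apply, ← arg_real_mul ((a : ℂ) + I * t) (inv_pos.2 (neg_pos.2 ht))]
  congr 1
  have : (t : ℂ) ≠ 0 := ofReal_ne_zero.2 ht.ne
  push_cast
  field_simp
  ring

theorem log_sub_log_conj_ofReal_add_I_mul (ha : 0 < a) (t : ℝ) :
    log ((a : ℂ) + I * t) - log ((a : ℂ) - I * t) = 2 * arg ((a : ℂ) + I * t) * I := by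
  rw [ofReal_sub_I_mul_eq_conj,
    log_conj _ (slitPlane_arg_ne_pi (ofReal_add_I_mul_mem_slitPlane ha t)), sub_conj, log_im]
  push_cast
  ring

end Log

section BaseIntegrals

variable {a b : ℝ}

theorem integral_inv_mul_ofReal_add_I_mul (ha : 0 < a) (hb : 0 < b) (hab : a ≠ b) :
    ∫ t : ℝ, (((a : ℂ) + I * t) * ((b : ℂ) + I * t))⁻¹ = 0 := by
  have hba : (b : ℂ) - a ≠ 0 := sub_ne_zero.2 (ofReal_injective.ne hab.symm)
  have hint : Integrable fun t : ℝ => (((a : ℂ) + I * t) * ((b : ℂ) + I * t))⁻¹ := by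
    simpa using integrable_laguerre ha hb (D := fun t => (b : ℂ) + I * t) (by fun_prop)
      (fun _ => le_rfl) zero_lt_one
  have hderiv : ∀ t : ℝ, HasDerivAt
      (fun t : ℝ => (log ((a : ℂ) + I * t) - log ((b : ℂ) + I * t)) / (I * (b - a)))
      (((a : ℂ) + I * t) * ((b : ℂ) + I * t))⁻¹ t := fun t => by
    refine (((hasDerivAt_log_ofReal_add_I_mul ha t).sub
      (hasDerivAt_log_ofReal_add_I_mul hb t)).div_const _).congr_deriv ?_
    have := ofReal_add_I_mul_ne_zero ha.ne' t
    have := ofReal_add_I_mul_ne_zero hb.ne' t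
    field_simp
    ring
  have hlim := (tendsto_log_sub_log ha hb).div_const (I * (b - a))
  rw [zero_div] at hlim
  simpa using integral_of_hasDerivAt_of_tendsto hderiv hint
    (hlim.mono_left atBot_le_cocompact) (hlim.mono_left atTop_le_cocompact)

theorem integral_inv_mul_ofReal_sub_I_mul (ha : 0 < a) (hb : 0 < b) :
    ∫ t : ℝ, (((a : ℂ) + I * t) * ((b : ℂ) - I * t))⁻¹ = 2 * π / (a + b) := by
  have hab : (a : ℂ) + b ≠ 0 := by exact_mod_cast (add_pos ha hb).ne'
  have hint : Integrable fun t : ℝ => (((a : ℂ) + I * t) * ((b : ℂ) - I * t))⁻¹ := by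
    simpa using integrable_laguerre ha hb (D := fun t => (b : ℂ) - I * t) (by fun_prop)
      (fun t => (norm_ofReal_sub_I_mul b t).ge) zero_lt_one
  have hderiv : ∀ t : ℝ, HasDerivAt
      (fun t : ℝ => (log ((a : ℂ) + I * t) - log ((b : ℂ) - I * t)) / (I * (a + b)))
      (((a : ℂ) + I * t) * ((b : ℂ) - I * t))⁻¹ t := fun t => by
    refine (((hasDerivAt_log_ofReal_add_I_mul ha t).sub
      (hasDerivAt_log_ofReal_sub_I_mul hb t)).div_const _).congr_deriv ?_
    have := ofReal_add_I_mul_ne_zero ha.ne' t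
    have := ofReal_sub_I_mul_ne_zero hb.ne' t
    field_simp
    ring
  have hsplit : ∀ t : ℝ, log ((a : ℂ) + I * t) - log ((b : ℂ) - I * t) =
      (log ((a : ℂ) + I * t) - log ((b : ℂ) + I * t)) + 2 * arg ((b : ℂ) + I * t) * I := fun t => by
    rw [← log_sub_log_conj_ofReal_add_I_mul hb]; ring
  have hlim {l : Filter ℝ} {θ : ℝ} (hl : l ≤ cocompact ℝ)
      (harg : Tendsto (fun t : ℝ => arg ((b : ℂ) + I * t)) l (𝓝 θ)) :
      Tendsto (fun t : ℝ => (log ((a : ℂ) + I * t) - log ((b : ℂ) - I * t)) / (I * (a + b))) l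
        (𝓝 ((0 + 2 * θ * I) / (I * (a + b)))) := by
    simp_rw [hsplit]
    exact (((tendsto_log_sub_log ha hb).mono_left hl).add
      ((((continuous_ofReal.tendsto θ).comp harg).const_mul 2).mul_const I)).div_const _
  rw [integral_of_hasDerivAt_of_tendsto hderiv hint
    (hlim atBot_le_cocompact (tendsto_arg_ofReal_add_I_mul_atBot b))
    (hlim atTop_le_cocompact (tendsto_arg_ofReal_add_I_mul_atTop b))]
  push_cast
  field_simp
  ring

end BaseIntegrals

section Recursion

variable {r κ : ℝ} {D : ℝ → ℂ}

theorem laguerreIntegral_succ_succ (hr : 0 < r) (hκ : 0 < κ) (hD : Continuous D)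
    (hDκ : ∀ t : ℝ, ‖(κ : ℂ) + I * t‖ ≤ ‖D t‖) {n p : ℕ} (hnp : n < p) :
    laguerreIntegral r D (n + 1) (p + 1) =
      2 * r * laguerreIntegral r D n (p + 1) - laguerreIntegral r D n p := by
  unfold laguerreIntegral
  rw [← integral_const_mul, ← integral_sub
    ((integrable_laguerre hr hκ hD hDκ (hnp.trans (Nat.lt_succ_self p))).const_mul _)
    (integrable_laguerre hr hκ hD hDκ hnp)]
  congr 1 with t
  have hz := ofReal_add_I_mul_ne_zero hr.ne' t
  have hDt : D t ≠ 0 := ne_zero_of_norm_ofReal_add_I_mul_le hκ (hDκ t)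
  rw [pow_succ, pow_succ]
  field_simp
  ring

theorem laguerreIntegral_zero_succ_succ (hr : 0 < r) (hκ : 0 < κ) (hD : Continuous D)
    (hDκ : ∀ t : ℝ, ‖(κ : ℂ) + I * t‖ ≤ ‖D t‖) {c s : ℂ} (hc : c ≠ 0)
    (hDc : ∀ t : ℝ, D t = c + s * ((r : ℂ) + I * t)) (p : ℕ) :
    laguerreIntegral r D 0 (p + 2) = -(s / c) * laguerreIntegral r D 0 (p + 1) := by
  have hpow : Integrable fun t : ℝ => (((r : ℂ) + I * t) ^ (p + 2))⁻¹ := by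
    simpa [pow_succ] using integrable_laguerre hr hr (D := fun t => (r : ℂ) + I * t)
      (by fun_prop) (fun _ => le_rfl) (Nat.succ_pos p)
  unfold laguerreIntegral
  calc _ = ∫ t : ℝ, c⁻¹ * (((r : ℂ) + I * t) ^ (p + 2))⁻¹ -
        s / c * (((r : ℂ) - I * t) ^ 0 / (((r : ℂ) + I * t) ^ (p + 1) * D t)) := by
        congr 1 with t
        have hz := ofReal_add_I_mul_ne_zero hr.ne' t
        have hDt : D t ≠ 0 := ne_zero_of_norm_ofReal_add_I_mul_le hκ (hDκ t)
        rw [hDc] at hDt ⊢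
        generalize (r : ℂ) + I * t = z at hz hDt ⊢
        field_simp
        ring
    _ = _ := by
        rw [integral_sub (hpow.const_mul _)
          ((integrable_laguerre hr hκ hD hDκ (by omega : 0 < p + 1)).const_mul _),
          integral_const_mul, integral_inv_ofReal_add_I_mul_pow hr, integral_const_mul]
        ring

theorem laguerreIntegral_eq_of_geometric (hr : 0 < r) (hκ : 0 < κ) (hD : Continuous D)
    (hDκ : ∀ t : ℝ, ‖(κ : ℂ) + I * t‖ ≤ ‖D t‖) {c : ℂ}
    (hc : ∀ p, laguerreIntegral r D 0 (p + 2) = c * laguerreIntegral r D 0 (p + 1)) (n q : ℕ) :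
    laguerreIntegral r D n (n + 1 + q) =
      laguerreIntegral r D 0 1 * c ^ q * (2 * r * c - 1) ^ n := by
  induction n generalizing q with
  | zero =>
    induction q with
    | zero => simp
    | succ q ih =>
      rw [show 0 + 1 + (q + 1) = q + 2 by ring, hc, show q + 1 = 0 + 1 + q by ring, ih]
      ring
  | succ n ih =>
    rw [show n + 1 + 1 + q = n + 1 + q + 1 by ring, laguerreIntegral_succ_succ hr hκ hD hDκ
      (by omega), show n + 1 + q + 1 = n + 1 + (q + 1) by ring, ih, ih]
    ring

end Recursion

section Evaluation

variable {r κ : ℝ}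

theorem laguerreIntegral_ofReal_add_I_mul (hr : 0 < r) (hκ : 0 < κ) {n p : ℕ} (hnp : n < p) :
    laguerreIntegral r (fun t => (κ : ℂ) + I * t) n p = 0 := by
  have hD : Continuous fun t : ℝ => (κ : ℂ) + I * t := by fun_prop
  have hzero : ∀ p, laguerreIntegral r (fun t => (κ : ℂ) + I * t) 0 (p + 1) = 0 := by
    rcases eq_or_ne r κ with rfl | hne
    · intro p
      simpa [laguerreIntegral, ← pow_succ] using integral_inv_ofReal_add_I_mul_pow hr p
    · intro p
      induction p with
      | zero => simpa [laguerreIntegral] using integral_inv_mul_ofReal_add_I_mul hr hκ hne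
      | succ p ih =>
        rw [laguerreIntegral_zero_succ_succ hr hκ hD (fun _ => le_rfl) (c := κ - r) (s := 1)
          (sub_ne_zero.2 (ofReal_injective.ne hne.symm)) (fun t => by ring), ih, mul_zero]
  obtain ⟨q, rfl⟩ : ∃ q, p = n + 1 + q := ⟨p - (n + 1), by omega⟩
  rw [laguerreIntegral_eq_of_geometric hr hκ hD (fun _ => le_rfl) (c := 0)
    (fun p => by rw [hzero, hzero, mul_zero]), hzero 0, zero_mul, zero_mul]

theorem laguerreIntegral_ofReal_sub_I_mul (hr : 0 < r) (hκ : 0 < κ) (n q : ℕ) :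
    laguerreIntegral r (fun t => (κ : ℂ) - I * t) n (n + 1 + q) =
      2 * π * (r - κ) ^ n / (r + κ) ^ (n + 1 + q) := by
  have hrκ : (r : ℂ) + κ ≠ 0 := by exact_mod_cast (add_pos hr hκ).ne'
  rw [laguerreIntegral_eq_of_geometric hr hκ (by fun_prop) (fun t => (norm_ofReal_sub_I_mul κ t).ge)
    (c := 1 / (r + κ)) fun p => by
      rw [laguerreIntegral_zero_succ_succ hr hκ (by fun_prop)
        (fun t => (norm_ofReal_sub_I_mul κ t).ge) (c := r + κ) (s := -1) hrκ (fun t => by ring)]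
      ring]
  have hbase : laguerreIntegral r (fun t => (κ : ℂ) - I * t) 0 1 = 2 * π / (r + κ) := by
    simpa [laguerreIntegral] using integral_inv_mul_ofReal_sub_I_mul hr hκ
  have hratio : 2 * r * (1 / ((r : ℂ) + κ)) - 1 = (r - κ) / (r + κ) := by
    field_simp
    ring
  rw [hbase, hratio, div_pow, div_pow, one_pow]
  field_simp
  ring

end Evaluation

/-- Lemma A.1, case `l > m`: with `s^±_{l,m}` the displayed Laguerre integrals,
`s^+_{l,m} = 0` and `s^-_{l,m} = (r−κ)^{l−m−1}/(r+κ)^{l−m+1}`. -/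
theorem laguerre_integral_l_gt_m (r κ : ℝ) (hr : 0 < r) (hκ : 0 < κ)
    (l m : ℕ) (hlm : m < l) :
    (1 / (2 * Real.pi) : ℂ) *
        ∫ t : ℝ, ((r : ℂ) - Complex.I * t) ^ l * ((r : ℂ) + Complex.I * t) ^ m /
          (((r : ℂ) + Complex.I * t) ^ (l + 1) * ((r : ℂ) - Complex.I * t) ^ (m + 1) *
            ((κ : ℂ) + Complex.I * t)) = 0 ∧
    (1 / (2 * Real.pi) : ℂ) *
        ∫ t : ℝ, ((r : ℂ) - Complex.I * t) ^ l * ((r : ℂ) + Complex.I * t) ^ m /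
          (((r : ℂ) + Complex.I * t) ^ (l + 1) * ((r : ℂ) - Complex.I * t) ^ (m + 1) *
            ((κ : ℂ) - Complex.I * t)) =
      (((r - κ) ^ (l - m - 1) / (r + κ) ^ (l - m + 1) : ℝ) : ℂ) := by
  obtain ⟨n, rfl⟩ : ∃ n, l = m + 1 + n := ⟨l - (m + 1), by omega⟩
  have hreduce (D : ℝ → ℂ) : ∫ t : ℝ, ((r : ℂ) - I * t) ^ (m + 1 + n) * ((r : ℂ) + I * t) ^ m /
      (((r : ℂ) + I * t) ^ (m + 1 + n + 1) * ((r : ℂ) - I * t) ^ (m + 1) * D t) =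
      laguerreIntegral r D n (n + 1 + 1) := by
    congr 1 with t
    have hz := ofReal_add_I_mul_ne_zero hr.ne' t
    have hw := ofReal_sub_I_mul_ne_zero hr.ne' t
    rcases eq_or_ne (D t) 0 with hD | hD
    · simp [hD]
    · field_simp
      ring
  rw [hreduce, hreduce, laguerreIntegral_ofReal_add_I_mul hr hκ (by omega),
    laguerreIntegral_ofReal_sub_I_mul hr hκ, show m + 1 + n - m - 1 = n by omega,
    show m + 1 + n - m + 1 = n + 1 + 1 by omega]
  have hπ : (π : ℂ) ≠ 0 := ofReal_ne_zero.2 pi_ne_zero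
  refine ⟨mul_zero _, ?_⟩
  push_cast
  field_simp
end

section
/- For every real r > 0 and all natural numbers l, m: (1/(2π))·∫_{ℝ} 2r·(r−it)^l·(r+it)^m / ( (r+it)^{l+1}·(r−it)^{m+1} ) dt = 1 if l = m, and = 0 if l ≠ m. -/
/-!
Substitute `θ = 2 arctan (t / r)`, which maps `ℝ` bijectively onto `(-π, π)` with
`dθ = 2r dt / (r² + t²)`. Since `r + it = (r / cos (θ/2)) e^{iθ/2}` and `r - it` is its conjugate,
`(r + it) / (r - it) = e^{iθ}`, so the integrand is `e^{i(m-l)θ} dθ` and the integral is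
`∫_{-π}^{π} e^{i(m-l)θ} dθ = 2π δ_{lm}`.
-/

open MeasureTheory Real Complex Set

noncomputable def cayleyAngle (r t : ℝ) : ℝ := 2 * Real.arctan (t / r)

lemma hasDerivAt_cayleyAngle {r : ℝ} (hr : r ≠ 0) (t : ℝ) :
    HasDerivAt (cayleyAngle r) (2 * r / (r ^ 2 + t ^ 2)) t := by
  refine (((hasDerivAt_id t).div_const r).arctan.const_mul 2).congr_deriv ?_
  rw [id]
  field_simp

lemma cayleyAngle_injective {r : ℝ} (hr : r ≠ 0) : Function.Injective (cayleyAngle r) := by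
  intro s t h
  have := Real.arctan_injective (mul_left_cancel₀ (two_ne_zero' ℝ) h)
  field_simp at this
  exact this

lemma range_cayleyAngle {r : ℝ} (hr : r ≠ 0) : range (cayleyAngle r) = Ioo (-π) π := by
  ext θ
  constructor
  · rintro ⟨t, rfl⟩
    obtain ⟨hlo, hhi⟩ := arctan_mem_Ioo (t / r)
    constructor <;> simp only [cayleyAngle] <;> linarith
  · rintro ⟨hlo, hhi⟩
    refine ⟨r * Real.tan (θ / 2), ?_⟩
    rw [cayleyAngle, mul_div_cancel_left₀ _ hr, Real.arctan_tan (by linarith) (by linarith)]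
    ring

lemma exp_cayleyAngle_mul_I {r : ℝ} (hr : r ≠ 0) (t : ℝ) :
    cexp (cayleyAngle r t * I) = (r + I * t) / (r - I * t) := by
  rw [cayleyAngle]
  set α := Real.arctan (t / r)
  have hcos : (Real.cos α : ℂ) ≠ 0 := ofReal_ne_zero.mpr (cos_arctan_pos _).ne'
  have ht : t = r * Real.sin α / Real.cos α := by
    rw [mul_div_assoc, ← Real.tan_eq_sin_div_cos, Real.tan_arctan]
    field_simp
  have hz : (r : ℂ) + I * t = r / Real.cos α * cexp (α * I) := by
    rw [Complex.exp_mul_I, ← ofReal_cos, ← ofReal_sin, ht]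
    simp only [ofReal_mul, ofReal_div]
    field_simp
  have hw : (r : ℂ) - I * t = r / Real.cos α * cexp (-(α * I)) := by
    rw [← neg_mul, ← ofReal_neg, Complex.exp_mul_I, ← ofReal_cos, ← ofReal_sin, Real.cos_neg,
      Real.sin_neg, ht]
    simp only [ofReal_mul, ofReal_div, ofReal_neg]
    field_simp
    ring
  have hr' : (r : ℂ) / Real.cos α ≠ 0 := div_ne_zero (ofReal_ne_zero.mpr hr) hcos
  rw [hz, hw, mul_div_mul_left _ _ hr', ← Complex.exp_sub, ofReal_mul, ofReal_ofNat]
  ring_nf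

lemma laguerre_integrand_eq {r : ℝ} (hr : r ≠ 0) (l m : ℕ) (t : ℝ) :
    2 * (r : ℂ) * ((r : ℂ) - I * t) ^ l * ((r : ℂ) + I * t) ^ m /
        (((r : ℂ) + I * t) ^ (l + 1) * ((r : ℂ) - I * t) ^ (m + 1)) =
      (2 * r / (r ^ 2 + t ^ 2)) • cexp (((m - l : ℤ) : ℂ) * cayleyAngle r t * I) := by
  have hz : (r : ℂ) + I * t ≠ 0 := fun h => hr (by simpa using congrArg re h)
  have hw : (r : ℂ) - I * t ≠ 0 := fun h => hr (by simpa using congrArg re h)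
  have hzw : ((r : ℂ) + I * t) * ((r : ℂ) - I * t) = (r ^ 2 + t ^ 2 : ℝ) := by
    push_cast
    linear_combination (-(t : ℂ) ^ 2) * I_sq
  have hexp : cexp (((m - l : ℤ) : ℂ) * cayleyAngle r t * I)
      = cexp (cayleyAngle r t * I) ^ m / cexp (cayleyAngle r t * I) ^ l := by
    rw [← Complex.exp_nat_mul, ← Complex.exp_nat_mul, ← Complex.exp_sub]
    push_cast
    ring_nf
  rw [hexp, exp_cayleyAngle_mul_I hr, Complex.real_smul, ofReal_div, ← hzw, ofReal_mul,
    ofReal_ofNat]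
  generalize (r : ℂ) + I * t = z at hz ⊢
  generalize (r : ℂ) - I * t = w at hw ⊢
  rw [div_pow, div_pow]
  field_simp
  ring

lemma integral_exp_int_mul_I (n : ℤ) :
    ∫ θ in -π..π, cexp (n * θ * I) = if n = 0 then (2 * π : ℂ) else 0 := by
  split_ifs with hn
  · simp [hn, two_mul]
  · have hc : (n * I : ℂ) ≠ 0 := by simp [hn, I_ne_zero]
    simp_rw [mul_right_comm _ _ I]
    rw [integral_exp_mul_complex hc, div_eq_zero_iff, sub_eq_zero, ofReal_neg, mul_neg]
    left
    -- `e^{inπ} = e^{-inπ} e^{2πin}`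
    rw [← mul_one (cexp (-_)), ← exp_int_mul_two_pi_mul_I n, ← Complex.exp_add]
    ring_nf

/-- Orthonormality of the Fourier-transformed Laguerre functions in
`L²(ℝ, dt/2π)` (underlying formula (4.3) of the paper):
`(1/2π)∫_ℝ 2r(r−it)^l(r+it)^m/((r+it)^{l+1}(r−it)^{m+1}) dt = δ_{lm}`. -/
theorem laguerre_orthonormality (r : ℝ) (hr : 0 < r) (l m : ℕ) :
    (1 / (2 * Real.pi) : ℂ) *
        ∫ t : ℝ, 2 * (r : ℂ) * ((r : ℂ) - Complex.I * t) ^ l * ((r : ℂ) + Complex.I * t) ^ m /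
          (((r : ℂ) + Complex.I * t) ^ (l + 1) * ((r : ℂ) - Complex.I * t) ^ (m + 1)) =
      if l = m then 1 else 0 := by
  have hsubst := integral_image_eq_integral_abs_deriv_smul MeasurableSet.univ
    (fun t _ => (hasDerivAt_cayleyAngle hr.ne' t).hasDerivWithinAt)
    (cayleyAngle_injective hr.ne').injOn (fun θ : ℝ => cexp (((m - l : ℤ) : ℂ) * θ * I))
  have habs (t : ℝ) : |2 * r / (r ^ 2 + t ^ 2)| = 2 * r / (r ^ 2 + t ^ 2) :=
    abs_of_pos (by positivity)
  rw [image_univ, range_cayleyAngle hr.ne', setIntegral_univ, ← integral_Ioc_eq_integral_Ioo,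
    ← intervalIntegral.integral_of_le (by linarith [pi_pos]), integral_exp_int_mul_I] at hsubst
  simp only [habs] at hsubst
  simp_rw [laguerre_integrand_eq hr.ne', ← hsubst, sub_eq_zero, Nat.cast_inj, eq_comm (a := m)]
  split_ifs
  · field_simp
  · simp
end

section
/- Let n ≥ 1 and N ≥ 1 be integers and ε ∈ (0, 1/2). Let f : ℝ^n → ℂ be integrable and assume that ξ ↦ |ξ|^{1−2ε}·f(ξ) is also integrable on ℝ^n. Then for every μ > 0: | ∫_{ℝ^n} f(ξ)·(|ξ|^2+μ^2)^{-N} dξ − μ^{-2N}·∫_{ℝ^n} f(ξ) dξ | ≤ N·μ^{-2N−1+2ε}·∫_{ℝ^n} |ξ|^{1−2ε}·|f(ξ)| dξ. -/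
open MeasureTheory Real

/-!
Write `μ⁻²ᴺ - (|ξ|² + μ²)⁻ᴺ = μ⁻²ᴺ (1 - tᴺ)` with `t = μ² / (|ξ|² + μ²) ∈ (0, 1]`. Bernoulli's
inequality gives `1 - tᴺ ≤ N (1 - t) = N |ξ|² / (|ξ|² + μ²)`, and this last quotient is at most
`min (1, |ξ|² / μ²) ≤ (|ξ| / μ) ^ s` for any `s ∈ [0, 2]`. Taking `s = 1 - 2ε` bounds the kernel
difference pointwise by `N μ^(-2N-s) |ξ|^s`, which is then integrated against `|f|`.
-/

lemma inv_pow_sub_inv_pow_le {a b : ℝ} (ha : 0 < a) (hab : a ≤ b) (N : ℕ) :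
    (a ^ N)⁻¹ - (b ^ N)⁻¹ ≤ N * (a ^ N)⁻¹ * ((b - a) / b) := by
  have hb : 0 < b := ha.trans_le hab
  have hbernoulli : 1 + N * (a / b - 1) ≤ (a / b) ^ N := by
    simpa using one_add_mul_le_pow (a := a / b - 1) (by linarith [div_pos ha hb]) N
  have hb_inv : (b ^ N)⁻¹ = (a ^ N)⁻¹ * (a / b) ^ N := by
    rw [div_pow]
    field_simp
  have hquot : (b - a) / b = 1 - a / b := by
    field_simp
  calc (a ^ N)⁻¹ - (b ^ N)⁻¹ = (a ^ N)⁻¹ * (1 - (a / b) ^ N) := by rw [hb_inv]; ring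
    _ ≤ (a ^ N)⁻¹ * (N * (1 - a / b)) := by gcongr; linarith
    _ = N * (a ^ N)⁻¹ * ((b - a) / b) := by rw [hquot]; ring

lemma sq_div_sq_add_sq_le_rpow {x μ s : ℝ} (hx : 0 ≤ x) (hμ : 0 < μ) (hs0 : 0 ≤ s)
    (hs2 : s ≤ 2) : x ^ 2 / (x ^ 2 + μ ^ 2) ≤ (x / μ) ^ s := by
  rcases le_or_gt x μ with hxμ | hμx
  · calc x ^ 2 / (x ^ 2 + μ ^ 2) ≤ x ^ 2 / μ ^ 2 := by
          gcongr
          linarith [sq_nonneg x]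
      _ = (x / μ) ^ (2 : ℝ) := by rw [rpow_two, div_pow]
      _ ≤ (x / μ) ^ s :=
          rpow_le_rpow_of_exponent_ge' (by positivity) (div_le_one_of_le₀ hxμ hμ.le) hs0 hs2
  · calc x ^ 2 / (x ^ 2 + μ ^ 2) ≤ 1 := div_le_one_of_le₀ (by nlinarith) (by positivity)
      _ ≤ (x / μ) ^ s := one_le_rpow ((one_le_div hμ).mpr hμx.le) hs0

lemma abs_inv_sq_add_sq_pow_sub_rpow_le (N : ℕ) {x μ s : ℝ} (hx : 0 ≤ x) (hμ : 0 < μ)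
    (hs0 : 0 ≤ s) (hs2 : s ≤ 2) :
    |((x ^ 2 + μ ^ 2) ^ N)⁻¹ - μ ^ (-2 * (N : ℝ))| ≤ N * μ ^ (-2 * (N : ℝ) - s) * x ^ s := by
  have hμ2 : 0 < μ ^ 2 := by positivity
  have hle : μ ^ 2 ≤ x ^ 2 + μ ^ 2 := le_add_of_nonneg_left (sq_nonneg x)
  have hμN : μ ^ (-2 * (N : ℝ)) = ((μ ^ 2) ^ N)⁻¹ := by
    rw [neg_mul, rpow_neg hμ.le, rpow_mul hμ.le, rpow_two, rpow_natCast]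
  have hnonneg : 0 ≤ ((μ ^ 2) ^ N)⁻¹ - ((x ^ 2 + μ ^ 2) ^ N)⁻¹ :=
    sub_nonneg.mpr (inv_anti₀ (by positivity) (pow_le_pow_left₀ hμ2.le hle N))
  rw [hμN, abs_sub_comm, abs_of_nonneg hnonneg]
  calc ((μ ^ 2) ^ N)⁻¹ - ((x ^ 2 + μ ^ 2) ^ N)⁻¹
      ≤ N * ((μ ^ 2) ^ N)⁻¹ * (x ^ 2 / (x ^ 2 + μ ^ 2)) := by
        simpa using inv_pow_sub_inv_pow_le hμ2 hle N
    _ ≤ N * ((μ ^ 2) ^ N)⁻¹ * (x / μ) ^ s := by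
        gcongr
        exact sq_div_sq_add_sq_le_rpow hx hμ hs0 hs2
    _ = N * μ ^ (-2 * (N : ℝ) - s) * x ^ s := by
        rw [div_rpow hx hμ.le, rpow_sub hμ, hμN]
        ring

section

variable {α 𝕜 : Type*} [MeasurableSpace α] {ν : Measure α} [RCLike 𝕜]

lemma norm_integral_mul_sub_const_mul_integral_le {g f : α → 𝕜} (c : 𝕜) {w : α → ℝ}
    (hg : AEStronglyMeasurable g ν) (hf : Integrable f ν)
    (hw : Integrable (fun x => w x * ‖f x‖) ν) (hgw : ∀ x, ‖g x - c‖ ≤ w x) :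
    ‖∫ x, g x * f x ∂ν - c * ∫ x, f x ∂ν‖ ≤ ∫ x, w x * ‖f x‖ ∂ν := by
  have hbound : ∀ x, ‖(g x - c) * f x‖ ≤ w x * ‖f x‖ := fun x => by
    rw [norm_mul]
    exact mul_le_mul_of_nonneg_right (hgw x) (norm_nonneg _)
  have hdiff : Integrable (fun x => (g x - c) * f x) ν :=
    hw.mono' ((hg.sub aestronglyMeasurable_const).mul hf.1) (ae_of_all _ hbound)
  have hsplit : ∫ x, g x * f x ∂ν = ∫ x, (g x - c) * f x ∂ν + c * ∫ x, f x ∂ν := by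
    rw [← integral_const_mul, ← integral_add hdiff (hf.const_mul c)]
    simp only [sub_mul, sub_add_cancel]
  rw [hsplit, add_sub_cancel_right]
  exact norm_integral_le_of_norm_le hw (ae_of_all _ hbound)

end

theorem resolvent_integral_remainder_estimate_general
    (n N : ℕ) (ε : ℝ) (hε : 0 < ε) (hε' : ε < 1 / 2)
    (f : EuclideanSpace ℝ (Fin n) → ℂ) (hf : Integrable f)
    (hf' : Integrable (fun ξ : EuclideanSpace ℝ (Fin n) =>
      (‖ξ‖ ^ (1 - 2 * ε) : ℝ) • f ξ))
    (μ : ℝ) (hμ : 0 < μ) :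
    ‖(∫ ξ : EuclideanSpace ℝ (Fin n), f ξ / ((‖ξ‖ ^ 2 + μ ^ 2 : ℝ) : ℂ) ^ N) -
        ((μ ^ (-2 * (N : ℝ)) : ℝ) : ℂ) * ∫ ξ : EuclideanSpace ℝ (Fin n), f ξ‖ ≤
      N * μ ^ (-2 * (N : ℝ) - 1 + 2 * ε) *
        ∫ ξ : EuclideanSpace ℝ (Fin n), ‖ξ‖ ^ (1 - 2 * ε) * ‖f ξ‖ := by
  set K : ℝ := N * μ ^ (-2 * (N : ℝ) - 1 + 2 * ε)
  have hkernel (ξ : EuclideanSpace ℝ (Fin n)) :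
      ‖(((‖ξ‖ ^ 2 + μ ^ 2 : ℝ) : ℂ) ^ N)⁻¹ - ((μ ^ (-2 * (N : ℝ)) : ℝ) : ℂ)‖ ≤
        K * ‖ξ‖ ^ (1 - 2 * ε) := by
    have h := abs_inv_sq_add_sq_pow_sub_rpow_le N (norm_nonneg ξ) hμ (s := 1 - 2 * ε)
      (by linarith) (by linarith)
    rw [show -2 * (N : ℝ) - (1 - 2 * ε) = -2 * (N : ℝ) - 1 + 2 * ε by ring] at h
    rw [← Complex.ofReal_pow, ← Complex.ofReal_inv, ← Complex.ofReal_sub, Complex.norm_real,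
      norm_eq_abs]
    exact h
  have hweight : Integrable (fun ξ => K * ‖ξ‖ ^ (1 - 2 * ε) * ‖f ξ‖) := by
    simp_rw [mul_assoc]
    refine (hf'.norm.const_mul K).congr (ae_of_all _ fun ξ => ?_)
    simp only [norm_smul, norm_of_nonneg (rpow_nonneg (norm_nonneg ξ) _)]
  simp_rw [div_eq_inv_mul]
  calc _ ≤ ∫ ξ, K * ‖ξ‖ ^ (1 - 2 * ε) * ‖f ξ‖ :=
        norm_integral_mul_sub_const_mul_integral_le _ (by fun_prop) hf hweight hkernel
    _ = K * ∫ ξ, ‖ξ‖ ^ (1 - 2 * ε) * ‖f ξ‖ := by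
        simp_rw [mul_assoc]
        exact integral_const_mul _ _

/-- Quantitative remainder estimate behind formulas (3.9)–(3.10) and (4.15):
for integrable `f` with `|ξ|^{1−2ε} f(ξ)` integrable, and `μ > 0`,
`|∫ f(ξ)(|ξ|²+μ²)^{-N} dξ − μ^{-2N}∫ f dξ| ≤ N μ^{-2N-1+2ε} ∫ |ξ|^{1-2ε}|f(ξ)| dξ`. -/
theorem resolvent_integral_remainder_estimate
    (n N : ℕ) (hn : 1 ≤ n) (hN : 1 ≤ N) (ε : ℝ) (hε : 0 < ε) (hε' : ε < 1 / 2)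
    (f : EuclideanSpace ℝ (Fin n) → ℂ) (hf : Integrable f)
    (hf' : Integrable (fun ξ : EuclideanSpace ℝ (Fin n) =>
      (‖ξ‖ ^ (1 - 2 * ε) : ℝ) • f ξ))
    (μ : ℝ) (hμ : 0 < μ) :
    ‖(∫ ξ : EuclideanSpace ℝ (Fin n), f ξ / ((‖ξ‖ ^ 2 + μ ^ 2 : ℝ) : ℂ) ^ N) -
        ((μ ^ (-2 * (N : ℝ)) : ℝ) : ℂ) * ∫ ξ : EuclideanSpace ℝ (Fin n), f ξ‖ ≤
      N * μ ^ (-2 * (N : ℝ) - 1 + 2 * ε) *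
        ∫ ξ : EuclideanSpace ℝ (Fin n), ‖ξ‖ ^ (1 - 2 * ε) * ‖f ξ‖ :=
  resolvent_integral_remainder_estimate_general n N ε hε hε' f hf hf' μ hμ
end

section
/- For every real μ > 0, setting κ(r) = √(r^2+μ^2): ∫_{1}^{∞} ∫_{ℝ} 1/( (r^2+t^2)·(κ(r)^2+t^2) ) dt dr = π·μ^{-2}·( log(√(1+μ^2)+1) − log 2 ). -/
/-! Since `κ(r)² - r² = μ²` does not depend on `t`, partial fractions split the inner integrand
into `μ⁻² (1/(r²+t²) - 1/(κ²+t²))`, and `∫ dt/(a²+t²) = π/a` gives `π μ⁻² (1/r - 1/κ(r))`.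
This is nonnegative with antiderivative `log r - log (r + κ(r)) = -log (1 + √(1 + μ²/r²))`,
which tends to `-log 2`. -/

open MeasureTheory Real Filter Topology Set

lemma one_div_sq_add_sq_eq {a : ℝ} (ha : a ≠ 0) (t : ℝ) :
    1 / (a ^ 2 + t ^ 2) = a⁻¹ ^ 2 * (1 + (a⁻¹ * t) ^ 2)⁻¹ := by
  field_simp

lemma integrable_one_div_sq_add_sq {a : ℝ} (ha : a ≠ 0) :
    Integrable fun t : ℝ => 1 / (a ^ 2 + t ^ 2) := by
  simp_rw [one_div_sq_add_sq_eq ha]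
  exact (integrable_inv_one_add_sq.comp_mul_left' (inv_ne_zero ha)).const_mul _

lemma integral_one_div_sq_add_sq {a : ℝ} (ha : 0 < a) :
    ∫ t : ℝ, 1 / (a ^ 2 + t ^ 2) = π / a := by
  simp_rw [one_div_sq_add_sq_eq ha.ne', integral_const_mul,
    Measure.integral_comp_mul_left (fun y => (1 + y ^ 2)⁻¹) a⁻¹,
    integral_univ_inv_one_add_sq, inv_inv, abs_of_pos ha, smul_eq_mul]
  field_simp

lemma integral_one_div_mul_sq_add_sq {a b : ℝ} (ha : 0 < a) (hb : 0 < b) (hab : a ≠ b) :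
    ∫ t : ℝ, 1 / ((a ^ 2 + t ^ 2) * (b ^ 2 + t ^ 2)) = π * (1 / a - 1 / b) / (b ^ 2 - a ^ 2) := by
  have hab2 : b ^ 2 - a ^ 2 ≠ 0 := by
    rw [sq_sub_sq]
    exact mul_ne_zero (by positivity) (sub_ne_zero.2 hab.symm)
  have partial_fractions : ∀ t : ℝ, 1 / ((a ^ 2 + t ^ 2) * (b ^ 2 + t ^ 2))
      = (1 / (a ^ 2 + t ^ 2) - 1 / (b ^ 2 + t ^ 2)) / (b ^ 2 - a ^ 2) := by
    intro t
    have : a ^ 2 + t ^ 2 ≠ 0 := by positivity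
    have : b ^ 2 + t ^ 2 ≠ 0 := by positivity
    field_simp
    ring
  simp_rw [partial_fractions, integral_div]
  rw [integral_sub (integrable_one_div_sq_add_sq ha.ne') (integrable_one_div_sq_add_sq hb.ne'),
    integral_one_div_sq_add_sq ha, integral_one_div_sq_add_sq hb]
  ring

lemma add_sqrt_sq_add_pos {c : ℝ} (hc : 0 < c) (r : ℝ) : 0 < r + √(r ^ 2 + c) := by
  have : |r| < √(r ^ 2 + c) := by
    rw [← sqrt_sq_eq_abs]
    exact sqrt_lt_sqrt (sq_nonneg r) (by linarith)
  linarith [neg_abs_le r]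

lemma hasDerivAt_log_add_sqrt_sq_add {c : ℝ} (hc : 0 < c) (r : ℝ) :
    HasDerivAt (fun x => log (x + √(x ^ 2 + c))) (1 / √(r ^ 2 + c)) r := by
  have hpos : 0 < r ^ 2 + c := by positivity
  have hsum := add_sqrt_sq_add_pos hc r
  have hsq : HasDerivAt (fun x => x ^ 2 + c) (2 * r) r := by
    simpa using (hasDerivAt_pow 2 r).add_const c
  have hsum' : HasDerivAt (fun x => x + √(x ^ 2 + c)) (1 + 2 * r / (2 * √(r ^ 2 + c))) r :=
    (hasDerivAt_id' r).add (hsq.sqrt hpos.ne')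
  convert hsum'.log hsum.ne' using 1
  field_simp
  ring

lemma log_sub_log_add_sqrt_sq_add {r : ℝ} (hr : 0 < r) (c : ℝ) :
    log r - log (r + √(r ^ 2 + c)) = -log (1 + √(1 + c / r ^ 2)) := by
  have hscale : √(r ^ 2 + c) = r * √(1 + c / r ^ 2) := by
    rw [← sqrt_sq hr.le, ← sqrt_mul (sq_nonneg r), sqrt_sq hr.le]
    field_simp
  rw [hscale, ← mul_one_add, log_mul hr.ne' (by positivity)]
  ring

lemma tendsto_log_sub_log_add_sqrt_sq_add (c : ℝ) :
    Tendsto (fun r => log r - log (r + √(r ^ 2 + c))) atTop (𝓝 (-log 2)) := by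
  have hquot : Tendsto (fun r : ℝ => c / r ^ 2) atTop (𝓝 0) :=
    tendsto_const_nhds.div_atTop (tendsto_pow_atTop two_ne_zero)
  have hlim : Tendsto (fun r : ℝ => -log (1 + √(1 + c / r ^ 2))) atTop (𝓝 (-log 2)) := by
    have := ((hquot.const_add 1).sqrt.const_add 1).log (by norm_num)
    norm_num at this
    exact this.neg
  refine hlim.congr' ?_
  filter_upwards [eventually_gt_atTop 0] with r hr
  exact (log_sub_log_add_sqrt_sq_add hr c).symm

lemma integral_Ioi_one_div_sub_one_div_sqrt_sq_add {a c : ℝ} (ha : 0 < a) (hc : 0 < c) :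
    ∫ r in Ioi a, (1 / r - 1 / √(r ^ 2 + c)) = log (a + √(a ^ 2 + c)) - log a - log 2 := by
  have hderiv : ∀ r ∈ Ici a,
      HasDerivAt (fun x => log x - log (x + √(x ^ 2 + c))) (1 / r - 1 / √(r ^ 2 + c)) r := by
    intro r hr
    have hr0 : 0 < r := ha.trans_le hr
    rw [one_div r]
    exact (hasDerivAt_log hr0.ne').sub (hasDerivAt_log_add_sqrt_sq_add hc r)
  have hnonneg : ∀ r ∈ Ioi a, 0 ≤ 1 / r - 1 / √(r ^ 2 + c) := by
    intro r hr
    have hr0 : 0 < r := ha.trans hr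
    have : r ≤ √(r ^ 2 + c) := le_sqrt_of_sq_le (by linarith)
    exact sub_nonneg.2 (one_div_le_one_div_of_le hr0 this)
  rw [integral_Ioi_of_hasDerivAt_of_nonneg' hderiv hnonneg (tendsto_log_sub_log_add_sqrt_sq_add c)]
  ring

/-- Combination of (4.28), (A.2) with `l = m`, and (A.4): for `μ > 0` and
`κ(r) = √(r²+μ²)`,
`∫_1^∞ ∫_ℝ dt dr/((r²+t²)(κ(r)²+t²)) = π μ⁻² (log(√(1+μ²)+1) − log 2)`. -/
theorem iterated_integral_diag_laguerre (μ : ℝ) (hμ : 0 < μ) :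
    ∫ r in Set.Ioi (1 : ℝ), ∫ t : ℝ,
        1 / ((r ^ 2 + t ^ 2) * ((Real.sqrt (r ^ 2 + μ ^ 2)) ^ 2 + t ^ 2)) =
      Real.pi * μ ^ (-2 : ℤ) * (Real.log (Real.sqrt (1 + μ ^ 2) + 1) - Real.log 2) := by
  have inner : ∀ r ∈ Ioi (1 : ℝ), ∫ t : ℝ, 1 / ((r ^ 2 + t ^ 2) * (√(r ^ 2 + μ ^ 2) ^ 2 + t ^ 2))
      = π / μ ^ 2 * (1 / r - 1 / √(r ^ 2 + μ ^ 2)) := by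
    intro r hr
    have hr0 : 0 < r := one_pos.trans hr
    have hκ : r < √(r ^ 2 + μ ^ 2) := lt_sqrt_of_sq_lt (by nlinarith)
    rw [integral_one_div_mul_sq_add_sq hr0 (hr0.trans hκ) hκ.ne, sq_sqrt (by positivity)]
    ring
  rw [setIntegral_congr_fun measurableSet_Ioi inner, integral_const_mul,
    integral_Ioi_one_div_sub_one_div_sqrt_sq_add one_pos (by positivity), one_pow, log_one, add_comm 1 (√(1 + μ ^ 2)), zpow_neg, zpow_ofNat]
  ring
end
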